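/- arXiv:2412.04574 — 4 statements merged into one kernel-verified Lean document; each statement's English description precedes it below -/
import Mathlib

section
/- Let (X, d) be a metric space and f : X → [−∞,+∞]. If f is (K,N)-convex for some K ≥ 0 and N < 0, then f_N = exp(−f/N) is 0-convex, i.e. convex along geodesics: for all x₀, x₁ ∈ D[f_N] there exists a geodesic γ : [0,1] → X from x₀ to x₁ with f_N(γ_t) ≤ (1−t)·f_N(x₀) + t·f_N(x₁) for all t ∈ [0,1]. -/
/-
For `K ≥ 0` the distortion coefficients are dominated by the linear ones: `σ_{K,N}^{(t)}(θ)` is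
either `t` or `sinh(tθa)/sinh(θa)` with `a = √(-K/N)`, and `sinh(tx) ≤ t sinh x` for `x ≥ 0` by
convexity of `sinh` on `[0, ∞)`. Since `-1/N > 0`, `f_N(x) < ∞` forces `f(x) < ∞`, so the
`(K,N)`-convexity inequality applies to any two points of `D[f_N]` and bounds `f_N` along the
geodesic by the linear interpolation.
-/

open Filter MeasureTheory Set
open scoped ENNReal Topology

noncomputable section

namespace KNPaper

variable {X : Type*} [MetricSpace X]

/-- A geodesic parametrized on `[0,1]`: `d(γ s, γ t) = |t - s| * d(γ 0, γ 1)`. -/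
def IsGeodesic (γ : ℝ → X) : Prop :=
  ∀ s ∈ Set.Icc (0:ℝ) 1, ∀ t ∈ Set.Icc (0:ℝ) 1,
    dist (γ s) (γ t) = |t - s| * dist (γ 0) (γ 1)

/-- Extended exponential `EReal → ℝ≥0∞`, with `exp ⊥ = 0` and `exp ⊤ = ⊤`. -/
def eexp (x : EReal) : ℝ≥0∞ :=
  if x = ⊤ then ⊤ else if x = ⊥ then 0 else ENNReal.ofReal (Real.exp x.toReal)

/-- The nonnegative part of an extended real, valued in `ℝ≥0∞`. -/
def epos (x : EReal) : ℝ≥0∞ :=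
  if x = ⊤ then ⊤ else ENNReal.ofReal x.toReal

/-- `f_N := exp (-f/N)`, with the conventions `exp(-∞) = 0`, `exp(+∞) = +∞`. -/
def fN (f : X → EReal) (N : ℝ) (x : X) : ℝ≥0∞ :=
  eexp (((-1/N : ℝ) : EReal) * f x)

/-- The finiteness domain `D[f]`. -/
def Dom (f : X → EReal) : Set X := {x | f x ≠ ⊤ ∧ f x ≠ ⊥}

/-- The extended domain `D*[f]`. -/
def DomStar (f : X → EReal) : Set X := {x | f x ≠ ⊤}

/-- The function `𝔰_{K,N}`. -/
def sKN (K N θ : ℝ) : ℝ :=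
  if K < 0 then Real.sin (θ * Real.sqrt (K/N)) / Real.sqrt (K/N)
  else if K = 0 then θ
  else Real.sinh (θ * Real.sqrt (-K/N)) / Real.sqrt (-K/N)

/-- The function `𝔠_{K,N}`. -/
def cKN (K N θ : ℝ) : ℝ :=
  if K < 0 then Real.cos (θ * Real.sqrt (K/N))
  else if K = 0 then 1
  else Real.cosh (θ * Real.sqrt (-K/N))

/-- The distortion coefficient `σ_{K,N}^{(t)}(θ)`, valued in `[0,∞]`. -/
def sigmaKN (K N t θ : ℝ) : ℝ≥0∞ :=
  if (N * Real.pi ^ 2 < K * θ ^ 2 ∧ K * θ ^ 2 < 0) ∨ 0 < K * θ ^ 2 then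
    ENNReal.ofReal (sKN K N (t * θ) / sKN K N θ)
  else if K * θ ^ 2 = 0 then ENNReal.ofReal t
  else ⊤

/-- `(K,N)`-convexity of `f` on a subset `s` (with `N < 0`). -/
def KNConvexOn (f : X → EReal) (K N : ℝ) (s : Set X) : Prop :=
  ∀ x₀ ∈ s, ∀ x₁ ∈ s, f x₀ ≠ ⊤ → f x₁ ≠ ⊤ →
    (K < 0 → dist x₀ x₁ < Real.pi * Real.sqrt (N / K)) →
    ∃ γ : ℝ → X, IsGeodesic γ ∧ (∀ t ∈ Set.Icc (0:ℝ) 1, γ t ∈ s) ∧ γ 0 = x₀ ∧ γ 1 = x₁ ∧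
      ∀ t ∈ Set.Icc (0:ℝ) 1,
        fN f N (γ t) ≤ sigmaKN K N (1 - t) (dist x₀ x₁) * fN f N x₀
          + sigmaKN K N t (dist x₀ x₁) * fN f N x₁

/-- `(K,N)`-convexity of `f` (with `N < 0`). -/
def KNConvex (f : X → EReal) (K N : ℝ) : Prop := KNConvexOn f K N Set.univ

/-- `λ`-convexity of an extended-real-valued function along geodesics. -/
def LambdaConvex (g : X → EReal) (lam : ℝ) : Prop :=
  ∀ x₀ x₁ : X, x₀ ∈ Dom g → x₁ ∈ Dom g →
    ∃ γ : ℝ → X, IsGeodesic γ ∧ γ 0 = x₀ ∧ γ 1 = x₁ ∧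
      ∀ t ∈ Set.Icc (0:ℝ) 1,
        g (γ t) ≤ (((1 - t) * (g x₀).toReal + t * (g x₁).toReal
          - lam / 2 * (t * (1 - t)) * dist x₀ x₁ ^ 2 : ℝ) : EReal)

/-- Upper right Dini derivative of a real function, valued in `EReal`. -/
def diniUR (g : ℝ → ℝ) (t : ℝ) : EReal :=
  Filter.limsup (fun h : ℝ => (((g (t + h) - g t) / h : ℝ) : EReal)) (𝓝[>] (0:ℝ))

/-- The time interval `(0,T)` for `T ∈ (0,∞]`, as a set of reals. -/
def domT (T : ℝ≥0∞) : Set ℝ := {t : ℝ | 0 < t ∧ ENNReal.ofReal t < T}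

/-- `EVI_λ` gradient curve for `g` on `(0,T)`. -/
def IsEVIlam (g : X → EReal) (lam : ℝ) (T : ℝ≥0∞) (z : ℝ → X) : Prop :=
  0 < T ∧ ContinuousOn z (domT T) ∧ (∀ t ∈ domT T, z t ∈ Dom g) ∧
    ∀ t ∈ domT T, ∀ x ∈ Dom g,
      diniUR (fun s => dist (z s) x ^ 2 / 2) t + ((lam / 2 * dist (z t) x ^ 2 : ℝ) : EReal)
        ≤ (((g x).toReal - (g (z t)).toReal : ℝ) : EReal)

/-- `EVI_{K,N}` gradient curve for `f` on `(0,T)` (with `N < 0`). -/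
def IsEVIKN (f : X → EReal) (K N : ℝ) (T : ℝ≥0∞) (y : ℝ → X) : Prop :=
  0 < T ∧ ContinuousOn y (domT T) ∧ (∀ t ∈ domT T, y t ∈ Dom f) ∧
    ∀ t ∈ domT T, ∀ x ∈ closure (Dom f),
      (K < 0 → dist (y t) x < Real.pi * Real.sqrt (N / K)) →
      diniUR (fun s => sKN K N (dist (y s) x / 2) ^ 2) t
          + ((K * sKN K N (dist (y t) x / 2) ^ 2 : ℝ) : EReal)
        ≤ ((N / 2 : ℝ) : EReal) * (1 - ((fN f N x / fN f N (y t) : ℝ≥0∞) : EReal))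

/-- A curve starts at `y₀` if `y_t → y₀` as `t ↓ 0`. -/
def StartsAt (y : ℝ → X) (y₀ : X) : Prop := Filter.Tendsto y (𝓝[>] (0:ℝ)) (𝓝 y₀)

/-- The class `𝒞` of continuous curves on `(0,T)` with values in `D[f]`. -/
def InC (f : X → EReal) (T : ℝ≥0∞) (y : ℝ → X) : Prop :=
  0 < T ∧ ContinuousOn y (domT T) ∧ ∀ t ∈ domT T, y t ∈ Dom f

/-- The class `𝒞'`: curves in `𝒞` along which `f` is non-increasing. -/
def InC' (f : X → EReal) (T : ℝ≥0∞) (y : ℝ → X) : Prop :=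
  InC f T y ∧ ∀ s ∈ domT T, ∀ t ∈ domT T, s ≤ t → f (y t) ≤ f (y s)

/-- The class `𝒞''_N`: curves in `𝒞'` with `∫₀^{min(T,1)} f_N(y_t) dt < ∞`. -/
def InC'' (f : X → EReal) (N : ℝ) (T : ℝ≥0∞) (y : ℝ → X) : Prop :=
  InC' f T y ∧ ∫⁻ t in Set.Ioo (0:ℝ) ((min T 1).toReal), fN f N (y t) < ⊤

/-- The function `α(t) = -N ∫₀ᵗ f_N(y_r)⁻¹ dr`. -/
def alphaMap (f : X → EReal) (N : ℝ) (y : ℝ → X) (t : ℝ) : ℝ :=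
  -N * ∫ r in Set.Ioo (0:ℝ) t, ((fN f N (y r))⁻¹).toReal

/-- The final time `T' = lim_{t→T⁻} α(t)` of the reparametrized curve `ℛ₁(y)`. -/
def R1T (f : X → EReal) (N : ℝ) (T : ℝ≥0∞) (y : ℝ → X) : ℝ≥0∞ :=
  ⨆ t ∈ domT T, ENNReal.ofReal (alphaMap f N y t)

/-- The reparametrized curve `ℛ₁(y) = y ∘ φ`, `φ = α⁻¹`. -/
def R1fun (f : X → EReal) (N : ℝ) (T : ℝ≥0∞) (y : ℝ → X) : ℝ → X :=
  y ∘ Function.invFunOn (alphaMap f N y) (domT T)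

/-- The function `β(s) = -(1/N) ∫₀ˢ f_N(z_r) dr`. -/
def betaMap (f : X → EReal) (N : ℝ) (z : ℝ → X) (s : ℝ) : ℝ :=
  -(1/N) * ∫ r in Set.Ioo (0:ℝ) s, (fN f N (z r)).toReal

/-- The final time `T = lim_{s→T'⁻} β(s)` of the reparametrized curve `ℛ₂(z)`. -/
def R2T (f : X → EReal) (N : ℝ) (T' : ℝ≥0∞) (z : ℝ → X) : ℝ≥0∞ :=
  ⨆ s ∈ domT T', ENNReal.ofReal (betaMap f N z s)

/-- The reparametrized curve `ℛ₂(z) = z ∘ ψ`, `ψ = β⁻¹`. -/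
def R2fun (f : X → EReal) (N : ℝ) (T' : ℝ≥0∞) (z : ℝ → X) : ℝ → X :=
  z ∘ Function.invFunOn (betaMap f N z) (domT T')

/-- The descending slope `|D⁻f|(y) = limsup_{z→y} (f(y)-f(z))⁺ / d(z,y)`, in `[0,∞]`. -/
def descSlope (f : X → EReal) (y : X) : ℝ≥0∞ :=
  Filter.limsup (fun z : X => epos (f y - f z) / ENNReal.ofReal (dist z y)) (𝓝[≠] y)

/-- Directional derivative `g'(γ 0; ·) = liminf_{t↓0} (g(γ t) - g(γ 0))/t` along a curve. -/
def dirDeriv (g : X → EReal) (γ : ℝ → X) : EReal :=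
  Filter.liminf (fun t : ℝ => (g (γ t) - g (γ 0)) * (((1/t : ℝ)) : EReal)) (𝓝[>] (0:ℝ))

/-- The quantity `[ẏ, z]_{t₀} = sup_{0<s≤1} (1/(2s)) (d⁺/dt)|_{t₀} d(y_t, z_s)²`. -/
def bracket (y z : ℝ → X) (t₀ : ℝ) : EReal :=
  ⨆ s ∈ Set.Ioc (0:ℝ) 1,
    (((1 / (2 * s) : ℝ)) : EReal) * diniUR (fun t => dist (y t) (z s) ^ 2) t₀

/-- Metric speed `|γ̇|(t) = lim_{h→0} d(γ(t+h), γ(t))/|h| = v`. -/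
def HasMetricSpeedAt (γ : ℝ → X) (t v : ℝ) : Prop :=
  Filter.Tendsto (fun h : ℝ => dist (γ (t + h)) (γ t) / |h|) (𝓝[≠] (0:ℝ)) (𝓝 v)

open Classical in
/-- The metric speed of a curve at a time (defaulting to `0` when it does not exist). -/
def metricSpeed (γ : ℝ → X) (t : ℝ) : ℝ :=
  if h : ∃ v, HasMetricSpeedAt γ t v then h.choose else 0

/-- Metric absolute continuity on `[s,t]` with derivative control in `Lᵖ`. -/
def MetricACWith (p : ℝ≥0∞) (γ : ℝ → X) (s t : ℝ) : Prop :=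
  ∃ g : ℝ → ℝ, MeasureTheory.MemLp g p (MeasureTheory.volume.restrict (Set.Icc s t)) ∧
    ∀ u ∈ Set.Icc s t, ∀ v ∈ Set.Icc s t, u ≤ v → dist (γ u) (γ v) ≤ ∫ r in u..v, g r

/-- `ACᵖ_loc` on a set: metric absolute continuity on every compact subinterval. -/
def LocACOn (p : ℝ≥0∞) (γ : ℝ → X) (I : Set ℝ) : Prop :=
  ∀ s t : ℝ, s ≤ t → Set.Icc s t ⊆ I → MetricACWith p γ s t

/-- Curve of maximal slope for `f` on `(0,T)`. -/
def IsMaxSlopeCurve (f : X → EReal) (T : ℝ≥0∞) (y : ℝ → X) : Prop :=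
  0 < T ∧ (∀ t ∈ domT T, y t ∈ Dom f) ∧
  LocACOn 1 y (domT T) ∧
  LocACOn 1 (fun t => (f (y t)).toReal) (domT T) ∧
  (∀ᵐ t ∂(MeasureTheory.volume.restrict (domT T)), ∃ v : ℝ, HasMetricSpeedAt y t v) ∧
  ∀ᵐ t ∂(MeasureTheory.volume.restrict (domT T)),
    ∃ d : ℝ, HasDerivAt (fun s => (f (y s)).toReal) d t ∧
      ENNReal.ofReal (2⁻¹ * metricSpeed y t ^ 2) + 2⁻¹ * descSlope f (y t) ^ 2
        ≤ ENNReal.ofReal (-d)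

end KNPaper

open Real

theorem Real.convexOn_sinh : ConvexOn ℝ (Set.Ici 0) sinh := by
  apply convexOn_of_deriv2_nonneg (convex_Ici 0) continuous_sinh.continuousOn
    differentiable_sinh.differentiableOn
  · rw [deriv_sinh]
    exact differentiable_cosh.differentiableOn
  · intro x hx
    rw [interior_Ici, Set.mem_Ioi] at hx
    simp only [Function.iterate_succ, Function.iterate_zero, Function.comp_apply, id,
      deriv_sinh, deriv_cosh]
    exact (sinh_pos_iff.mpr hx).le

theorem Real.sinh_mul_le_mul_sinh {t x : ℝ} (ht₀ : 0 ≤ t) (ht₁ : t ≤ 1) (hx : 0 ≤ x) :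
    sinh (t * x) ≤ t * sinh x := by
  simpa [sinh_zero] using
    convexOn_sinh.2 Set.self_mem_Ici hx (by linarith : (0:ℝ) ≤ 1 - t) ht₀ (by ring)

namespace KNPaper

theorem sigmaKN_le_ofReal {K N t θ : ℝ} (hK : 0 ≤ K) (hN : N < 0) (ht₀ : 0 ≤ t) (ht₁ : t ≤ 1)
    (hθ : 0 ≤ θ) : sigmaKN K N t θ ≤ ENNReal.ofReal t := by
  unfold sigmaKN
  rcases (mul_nonneg hK (sq_nonneg θ)).eq_or_lt with hzero | hpos
  · rw [if_neg (by rintro (⟨-, h⟩ | h) <;> linarith), if_pos hzero.symm]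
  rw [if_pos (Or.inr hpos)]
  refine ENNReal.ofReal_le_ofReal ?_
  have hKpos : 0 < K := by nlinarith [sq_nonneg θ]
  have hθpos : 0 < θ := hθ.lt_of_ne (by rintro rfl; simp at hpos)
  have ha : 0 < √(-K / N) := sqrt_pos.2 (div_pos_of_neg_of_neg (by linarith) hN)
  set a := √(-K / N)
  simp only [sKN, if_neg (not_lt.2 hK), if_neg hKpos.ne']
  have hs : 0 < sinh (θ * a) := sinh_pos_iff.2 (by positivity)
  rw [div_div_div_cancel_right₀ ha.ne', div_le_iff₀ hs, mul_assoc]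
  exact sinh_mul_le_mul_sinh ht₀ ht₁ (by positivity)

theorem ne_top_of_fN_ne_top {X : Type*} {f : X → EReal} {N : ℝ} (hN : N < 0) {x : X}
    (hx : fN f N x ≠ ⊤) : f x ≠ ⊤ := by
  intro hfx
  apply hx
  rw [fN, hfx, EReal.coe_mul_top_of_pos (div_pos_of_neg_of_neg (by norm_num) hN)]
  simp [eexp]

end KNPaper

theorem stmt_1 {X : Type*} [MetricSpace X] (f : X → EReal) (K N : ℝ) (hK : 0 ≤ K)
    (hN : N < 0) (hf : KNPaper.KNConvex f K N) :
    ∀ x₀ x₁ : X, KNPaper.fN f N x₀ ≠ ⊤ → KNPaper.fN f N x₁ ≠ ⊤ →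
      ∃ γ : ℝ → X, KNPaper.IsGeodesic γ ∧ γ 0 = x₀ ∧ γ 1 = x₁ ∧
        ∀ t ∈ Set.Icc (0:ℝ) 1,
          KNPaper.fN f N (γ t) ≤ ENNReal.ofReal (1 - t) * KNPaper.fN f N x₀
            + ENNReal.ofReal t * KNPaper.fN f N x₁ := by
  intro x₀ x₁ h₀ h₁
  obtain ⟨γ, hγ, -, hγ₀, hγ₁, hle⟩ := hf x₀ (Set.mem_univ _) x₁ (Set.mem_univ _)
    (KNPaper.ne_top_of_fN_ne_top hN h₀) (KNPaper.ne_top_of_fN_ne_top hN h₁)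
    (fun h => absurd h (not_lt.2 hK))
  refine ⟨γ, hγ, hγ₀, hγ₁, fun t ⟨ht₀, ht₁⟩ => (hle t ⟨ht₀, ht₁⟩).trans ?_⟩
  gcongr
  · exact KNPaper.sigmaKN_le_ofReal hK hN (by linarith) (by linarith) dist_nonneg
  · exact KNPaper.sigmaKN_le_ofReal hK hN ht₀ ht₁ dist_nonneg
end
end

section
/- Let (X, d) be a metric space, λ ∈ ℝ, and let g : X → [−∞,+∞] be lower semicontinuous and λ-convex. Let (z_t)_{t∈(0,T)}, T ∈ (0,+∞], be a continuous curve with values in D[g], and assume that for every t ∈ (0,T) there exists a neighborhood Z_t of z_t in X such that (d⁺/dt) ½·d(z_t, z)² + (λ/2)·d(z_t, z)² ≤ g(z) − g(z_t) holds for every z ∈ Z_t ∩ D[g]. Then (z_t)_{t∈(0,T)} is an EVI_λ gradient curve for g, i.e. the same inequality holds for every z ∈ D[g] and every t ∈ (0,T). -/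
open Filter MeasureTheory Set
open scoped ENNReal Topology

noncomputable section

/-!
To test the inequality against a distant `x ∈ D[g]`, walk from `z_t` towards `x` along a
geodesic `γ` given by `λ`-convexity and stop at a point `w = γ_s` inside the neighbourhood where
the inequality is known; lower semicontinuity keeps `g w > -∞`, so `w ∈ D[g]`. Since `w` lies on a
geodesic from `z_t` to `x`, the triangle inequality through `w` gives
`s (d²(·, x) - d²(z_t, x)) ≤ d²(·, w) - d²(z_t, w)`, so the Dini derivative of `½ d²(z_·, x)` is at
most `1/s` times that of `½ d²(z_·, w)`. The convexity inequality for `g(γ_s)` then turns the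
inequality tested against `w` into the one tested against `x`.
-/

namespace KNPaper

variable {X : Type*} [MetricSpace X]

def EVIIneq (g : X → EReal) (lam : ℝ) (z : ℝ → X) (t : ℝ) (x : X) : Prop :=
  diniUR (fun s => dist (z s) x ^ 2 / 2) t + ((lam / 2 * dist (z t) x ^ 2 : ℝ) : EReal)
    ≤ (((g x).toReal - (g (z t)).toReal : ℝ) : EReal)

theorem diniUR_le_const_mul {f₁ f₂ : ℝ → ℝ} {t c : ℝ} (hc : 0 ≤ c)
    (hle : ∀ h > 0, f₁ (t + h) - f₁ t ≤ c * (f₂ (t + h) - f₂ t)) :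
    diniUR f₁ t ≤ (c : EReal) * diniUR f₂ t := by
  rw [diniUR, diniUR, ← EReal.limsup_const_mul_of_nonneg_of_ne_top (EReal.coe_nonneg.2 hc)
    (EReal.coe_ne_top c)]
  refine limsup_le_limsup ?_
  filter_upwards [self_mem_nhdsWithin] with h (hpos : 0 < h)
  rw [← EReal.coe_mul, EReal.coe_le_coe_iff, ← mul_div_assoc]
  exact div_le_div_of_nonneg_right (hle h hpos) hpos.le

theorem mul_sub_half_sq_dist_le {p y w x : X} {s : ℝ} (hs0 : 0 ≤ s) (hs1 : s ≤ 1)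
    (hyw : dist y w = s * dist y x) (hwx : dist w x = (1 - s) * dist y x) :
    s * (dist p x ^ 2 / 2 - dist y x ^ 2 / 2) ≤ dist p w ^ 2 / 2 - dist y w ^ 2 / 2 := by
  have htri : dist p x ≤ dist p w + (1 - s) * dist y x := hwx ▸ dist_triangle p w x
  have hsq := pow_le_pow_left₀ dist_nonneg htri 2
  rw [hyw]
  -- after the triangle inequality the remaining slack is `(1 - s) (d(p, w) - s d(y, x))² / 2`
  nlinarith [mul_le_mul_of_nonneg_left hsq hs0,
    mul_nonneg (sub_nonneg.2 hs1) (sq_nonneg (dist p w - s * dist y x))]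

theorem EVIIneq.of_mem_geodesic {g : X → EReal} {lam : ℝ} {z : ℝ → X} {t s : ℝ} {w x : X}
    (hs0 : 0 < s) (hs1 : s ≤ 1)
    (hzw : dist (z t) w = s * dist (z t) x) (hwx : dist w x = (1 - s) * dist (z t) x)
    (hgw : (g w).toReal ≤ (1 - s) * (g (z t)).toReal + s * (g x).toReal
      - lam / 2 * (s * (1 - s)) * dist (z t) x ^ 2)
    (hw : EVIIneq g lam z t w) : EVIIneq g lam z t x := by
  set d := dist (z t) x
  have hdini : diniUR (fun r => dist (z r) x ^ 2 / 2) t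
      ≤ ((s⁻¹ : ℝ) : EReal) * diniUR (fun r => dist (z r) w ^ 2 / 2) t := by
    refine diniUR_le_const_mul (inv_nonneg.2 hs0.le) fun h _ => ?_
    rw [le_inv_mul_iff₀ hs0]
    exact mul_sub_half_sq_dist_le hs0.le hs1 hzw hwx
  have hw' : diniUR (fun r => dist (z r) w ^ 2 / 2) t
      ≤ (((g w).toReal - (g (z t)).toReal - lam / 2 * (s * d) ^ 2 : ℝ) : EReal) := by
    rw [EReal.coe_sub, EReal.le_sub_iff_add_le (.inl (EReal.coe_ne_bot _))
      (.inl (EReal.coe_ne_top _)), ← hzw]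
    exact hw
  have harith : s⁻¹ * ((g w).toReal - (g (z t)).toReal - lam / 2 * (s * d) ^ 2)
      ≤ (g x).toReal - (g (z t)).toReal - lam / 2 * d ^ 2 := by
    rw [inv_mul_le_iff₀ hs0]
    nlinarith
  calc diniUR (fun r => dist (z r) x ^ 2 / 2) t + ((lam / 2 * d ^ 2 : ℝ) : EReal)
      ≤ ((s⁻¹ : ℝ) : EReal) * (((g w).toReal - (g (z t)).toReal - lam / 2 * (s * d) ^ 2 : ℝ)
          : EReal) + ((lam / 2 * d ^ 2 : ℝ) : EReal) :=
        add_le_add_left (hdini.trans (mul_le_mul_of_nonneg_left hw' (by positivity))) _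
    _ ≤ (((g x).toReal - (g (z t)).toReal : ℝ) : EReal) := by
        rw [← EReal.coe_mul, ← EReal.coe_add, EReal.coe_le_coe_iff]
        linarith

theorem IsGeodesic.dist_zero_apply {γ : ℝ → X} (hγ : IsGeodesic γ) {s : ℝ}
    (hs : s ∈ Icc (0 : ℝ) 1) : dist (γ 0) (γ s) = s * dist (γ 0) (γ 1) := by
  rw [hγ 0 ⟨le_rfl, zero_le_one⟩ s hs, sub_zero, abs_of_nonneg hs.1]

theorem IsGeodesic.dist_apply_one {γ : ℝ → X} (hγ : IsGeodesic γ) {s : ℝ}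
    (hs : s ∈ Icc (0 : ℝ) 1) : dist (γ s) (γ 1) = (1 - s) * dist (γ 0) (γ 1) := by
  rw [hγ s hs 1 ⟨zero_le_one, le_rfl⟩, abs_of_nonneg (sub_nonneg.2 hs.2)]

theorem IsGeodesic.tendsto_nhdsGT_zero {γ : ℝ → X} (hγ : IsGeodesic γ) :
    Tendsto γ (𝓝[>] 0) (𝓝 (γ 0)) := by
  rw [tendsto_iff_dist_tendsto_zero]
  have hlin : Tendsto (fun s : ℝ => s * dist (γ 0) (γ 1)) (𝓝[>] 0) (𝓝 0) := by
    simpa using ((continuous_mul_const (dist (γ 0) (γ 1))).tendsto 0).mono_left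
      (nhdsWithin_le_nhds (s := Ioi 0))
  refine hlin.congr' ?_
  filter_upwards [Ioc_mem_nhdsGT zero_lt_one] with s hs
  rw [dist_comm (γ s), hγ.dist_zero_apply (Ioc_subset_Icc_self hs)]

theorem EVIIneq.of_nhds {g : X → EReal} {lam : ℝ} {z : ℝ → X} {t : ℝ} {x : X}
    (hlsc : LowerSemicontinuous g) (hconv : LambdaConvex g lam) (hzt : z t ∈ Dom g)
    (hx : x ∈ Dom g) (hloc : ∃ Z ∈ 𝓝 (z t), ∀ w ∈ Z ∩ Dom g, EVIIneq g lam z t w) :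
    EVIIneq g lam z t x := by
  obtain ⟨Z, hZ, hZevi⟩ := hloc
  obtain ⟨γ, hγ, hγ0, hγ1, hγconv⟩ := hconv (z t) x hzt hx
  have hnear : ∀ᶠ w in 𝓝 (z t), w ∈ Z ∧ g w ≠ ⊥ :=
    Filter.Eventually.and hZ ((hlsc _ ⊥ (bot_lt_iff_ne_bot.2 hzt.2)).mono fun _ h => h.ne')
  obtain ⟨s, ⟨hγsZ, hγs_bot⟩, hs⟩ :=
    (((hγ0 ▸ hγ.tendsto_nhdsGT_zero).eventually hnear).and (Ioc_mem_nhdsGT zero_lt_one)).exists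
  have hsI : s ∈ Icc (0 : ℝ) 1 := Ioc_subset_Icc_self hs
  have hbound := hγconv s hsI
  have hγs_top : g (γ s) ≠ ⊤ := ne_top_of_le_ne_top (EReal.coe_ne_top _) hbound
  refine EVIIneq.of_mem_geodesic hs.1 hs.2 ?_ ?_ ?_ (hZevi _ ⟨hγsZ, hγs_top, hγs_bot⟩)
  · simpa [hγ0, hγ1] using hγ.dist_zero_apply hsI
  · simpa [hγ0, hγ1] using hγ.dist_apply_one hsI
  · simpa only [EReal.toReal_coe] using
      EReal.toReal_le_toReal hbound hγs_bot (EReal.coe_ne_top _)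

end KNPaper

theorem stmt_3 {X : Type*} [MetricSpace X] (g : X → EReal) (lam : ℝ)
    (hlsc : LowerSemicontinuous g) (hconv : KNPaper.LambdaConvex g lam)
    (T : ℝ≥0∞) (hT : 0 < T) (z : ℝ → X)
    (hcont : ContinuousOn z (KNPaper.domT T))
    (hdom : ∀ t ∈ KNPaper.domT T, z t ∈ KNPaper.Dom g)
    (hloc : ∀ t ∈ KNPaper.domT T, ∃ Z ∈ 𝓝 (z t), ∀ x ∈ Z ∩ KNPaper.Dom g,
      KNPaper.diniUR (fun s => dist (z s) x ^ 2 / 2) t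
          + ((lam / 2 * dist (z t) x ^ 2 : ℝ) : EReal)
        ≤ (((g x).toReal - (g (z t)).toReal : ℝ) : EReal)) :
    KNPaper.IsEVIlam g lam T z :=
  ⟨hT, hcont, hdom, fun t ht _ hx =>
    KNPaper.EVIIneq.of_nhds hlsc hconv (hdom t ht) hx (hloc t ht)⟩
end
end

section
/- Let (X, d) be a metric space, f : X → [−∞,+∞] lower semicontinuous, K ∈ ℝ and N < 0. If (y_t)_{t∈(0,T)} is an EVI_{K,N} gradient curve for f, then the function (0,T) ∋ t ↦ f(y_t) is non-increasing. -/
open Filter MeasureTheory Set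
open scoped ENNReal Topology

noncomputable section

/-!
Suppose `f (y u) < c < f (y v)` with `u ≤ v`, and let `w` be the last time in `[u, v]` with
`f (y w) ≤ c`; it exists because `f ∘ y` is lower semicontinuous. After `w` we have
`f (y r) > c ≥ f (y w)`, so `f_N (y w) / f_N (y r) ≤ 1` and the right-hand side of the EVI tested
at `z = y w` is nonpositive. Hence `g r = 𝔰_{K,N}(d(y r, y w)/2)²` satisfies `d⁺g ≤ -K g` with
`g w = 0`, and Gronwall's lemma forces `y r = y w` for `r` slightly after `w`, contradicting the
maximality of `w`.
-/

namespace KNPaper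

lemma frequently_slope_lt_of_diniUR_lt {g : ℝ → ℝ} {x r : ℝ} (h : diniUR g x < r) :
    ∃ᶠ z in 𝓝[>] x, (z - x)⁻¹ * (g z - g x) < r := by
  have hmap : Tendsto (fun z => z - x) (𝓝[>] x) (𝓝[>] 0) := by
    refine tendsto_nhdsWithin_of_tendsto_nhds_of_eventually_within _ ?_ ?_
    · exact tendsto_nhdsWithin_of_tendsto_nhds (by simpa using (continuous_sub_right x).tendsto x)
    · filter_upwards [self_mem_nhdsWithin] with z (hz : x < z) using sub_pos.2 hz
  refine Eventually.frequently <|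
    (hmap.eventually (eventually_lt_of_limsup_lt h)).mono fun z hz => ?_
  rw [add_sub_cancel] at hz
  rw [inv_mul_eq_div]
  exact_mod_cast hz

lemma le_zero_of_diniUR_le_mul {g : ℝ → ℝ} {a b L : ℝ} (hg : ContinuousOn g (Icc a b))
    (ha : g a ≤ 0) (hdini : ∀ x ∈ Ico a b, diniUR g x ≤ ((L * g x : ℝ) : EReal)) :
    ∀ x ∈ Icc a b, g x ≤ 0 := by
  intro x hx
  simpa [gronwallBound_ε0_δ0] using le_gronwallBound_of_liminf_deriv_right_le hg
    (fun x hx r hr => frequently_slope_lt_of_diniUR_lt ((hdini x hx).trans_lt (mod_cast hr)))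
    ha (fun x _ => (add_zero _).ge) x hx

lemma eexp_mono : Monotone eexp := by
  intro a b hab
  induction a using EReal.rec <;> induction b using EReal.rec <;> simp_all [eexp]
  exact ENNReal.ofReal_le_ofReal (Real.exp_le_exp.2 hab)

lemma fN_le_fN {X : Type*} {f : X → EReal} {N : ℝ} (hN : N < 0) {x z : X} (h : f z ≤ f x) :
    fN f N z ≤ fN f N x :=
  eexp_mono <| mul_le_mul_of_nonneg_left h <|
    EReal.coe_nonneg.2 (div_nonneg_of_nonpos (by norm_num) hN.le)

lemma coe_mul_one_sub_nonpos {a : ℝ} (ha : a ≤ 0) {q : ℝ≥0∞} (hq : q ≤ 1) :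
    (a : EReal) * (1 - (q : EReal)) ≤ 0 := by
  rw [← EReal.coe_ennreal_toReal (ne_top_of_le_ne_top ENNReal.one_ne_top hq), ← EReal.coe_one,
    ← EReal.coe_sub, ← EReal.coe_mul, EReal.coe_nonpos]
  have : q.toReal ≤ 1 := ENNReal.toReal_le_of_le_ofReal zero_le_one (by simpa using hq)
  nlinarith

lemma sKN_zero (K N : ℝ) : sKN K N 0 = 0 := by
  unfold sKN; split_ifs <;> simp

lemma continuous_sKN (K N : ℝ) : Continuous (sKN K N) := by
  unfold sKN; split_ifs <;> fun_prop

lemma eq_zero_of_sKN_half_eq_zero {K N d : ℝ} (hN : N < 0) (hd : 0 ≤ d)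
    (hguard : K < 0 → d < Real.pi * Real.sqrt (N / K)) (h : sKN K N (d / 2) = 0) : d = 0 := by
  by_contra hne
  have hd : 0 < d / 2 := by positivity
  unfold sKN at h
  split_ifs at h with hK hK0
  · have hs : 0 < Real.sqrt (K / N) := Real.sqrt_pos.2 (div_pos_of_neg_of_neg hK hN)
    have hlt : d / 2 * Real.sqrt (K / N) < Real.pi := by
      have := hguard hK
      rw [← inv_div, Real.sqrt_inv, ← div_eq_mul_inv, lt_div_iff₀ hs] at this
      nlinarith [Real.pi_pos]
    exact (Real.sin_pos_of_pos_of_lt_pi (by positivity) hlt).ne'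
      (div_eq_zero_iff.1 h |>.resolve_right hs.ne')
  · linarith
  · have hs : 0 < Real.sqrt (-K / N) :=
      Real.sqrt_pos.2 (div_pos_of_neg_of_neg (neg_neg_of_pos ((not_lt.1 hK).lt_of_ne' hK0)) hN)
    exact (Real.sinh_pos_iff.2 (by positivity)).ne' (div_eq_zero_iff.1 h |>.resolve_right hs.ne')

lemma ordConnected_domT (T : ℝ≥0∞) : (domT T).OrdConnected :=
  ⟨fun _ hu _ hv _ hr => ⟨hu.1.trans_le hr.1, (ENNReal.ofReal_le_ofReal hr.2).trans_lt hv.2⟩⟩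

variable {X : Type*} [MetricSpace X] {f : X → EReal} {K N : ℝ} {T : ℝ≥0∞} {y : ℝ → X}

lemma IsEVIKN.diniUR_le_of_le (hy : IsEVIKN f K N T y) (hN : N < 0) {t : ℝ} (ht : t ∈ domT T)
    {z : X} (hz : z ∈ closure (Dom f))
    (hguard : K < 0 → dist (y t) z < Real.pi * Real.sqrt (N / K))
    (hle : f z ≤ f (y t)) :
    diniUR (fun s => sKN K N (dist (y s) z / 2) ^ 2) t
      ≤ ((-K * sKN K N (dist (y t) z / 2) ^ 2 : ℝ) : EReal) := by
  have hratio : fN f N z / fN f N (y t) ≤ 1 :=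
    ENNReal.div_le_of_le_mul (by rw [one_mul]; exact fN_le_fN hN hle)
  have hevi := (hy.2.2.2 t ht z hz hguard).trans (coe_mul_one_sub_nonpos (by linarith) hratio)
  rw [neg_mul, EReal.coe_neg, ← zero_sub]
  exact (EReal.le_sub_iff_add_le (by simp) (by simp)).2 hevi

lemma IsEVIKN.exists_eq_of_forall_le (hy : IsEVIKN f K N T y) (hN : N < 0) {w v : ℝ}
    (hw : w ∈ domT T) (hv : v ∈ domT T) (hwv : w < v)
    (hmin : ∀ r ∈ Ioc w v, f (y w) ≤ f (y r)) :
    ∃ r ∈ Ioc w v, y r = y w := by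
  have hsub : Icc w v ⊆ domT T := (ordConnected_domT T).out hw hv
  have hnear : ∀ᶠ r in 𝓝[≥] w, K < 0 → dist (y r) (y w) < Real.pi * Real.sqrt (N / K) := by
    have hc := (hy.2.1.mono hsub) w ⟨le_rfl, hwv.le⟩
    rw [ContinuousWithinAt, nhdsWithin_Icc_eq_nhdsGE hwv] at hc
    by_cases hK : K < 0
    · have hR : 0 < Real.pi * Real.sqrt (N / K) :=
        mul_pos Real.pi_pos (Real.sqrt_pos.2 (div_pos_of_neg_of_neg hN hK))
      filter_upwards [Metric.tendsto_nhds.1 hc _ hR] with r hr using fun _ => hr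
    · exact Eventually.of_forall fun _ h => absurd h hK
  obtain ⟨u, hu, hball⟩ := mem_nhdsGE_iff_exists_Icc_subset.1 hnear
  have hv' : min u v ∈ Ioc w v := ⟨lt_min hu hwv, min_le_right _ _⟩
  have hsub' : Icc w (min u v) ⊆ Icc w v := Icc_subset_Icc_right (min_le_right _ _)
  have hball' : ∀ r ∈ Icc w (min u v), K < 0 → dist (y r) (y w) < Real.pi * Real.sqrt (N / K) :=
    fun r hr => hball (Icc_subset_Icc_right (min_le_left _ _) hr)
  have hdini : ∀ r ∈ Ico w (min u v), diniUR (fun s => sKN K N (dist (y s) (y w) / 2) ^ 2) r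
      ≤ ((-K * sKN K N (dist (y r) (y w) / 2) ^ 2 : ℝ) : EReal) := fun r hr =>
    hy.diniUR_le_of_le hN (hsub (hsub' (Ico_subset_Icc_self hr)))
      (subset_closure (hy.2.2.1 w hw)) (hball' r (Ico_subset_Icc_self hr))
      (hr.1.eq_or_lt.elim (fun h => h ▸ le_rfl)
        fun h => hmin r ⟨h, hr.2.le.trans (min_le_right _ _)⟩)
  have hcont : ContinuousOn (fun s => sKN K N (dist (y s) (y w) / 2) ^ 2) (Icc w (min u v)) :=
    ((continuous_sKN K N).comp_continuousOn (((continuous_id.dist continuous_const).comp_continuousOn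
      (hy.2.1.mono (hsub.trans' hsub'))).div_const 2)).pow 2
  have hg := le_zero_of_diniUR_le_mul hcont (by simp [sKN_zero]) hdini (min u v) ⟨hv'.1.le, le_rfl⟩
  refine ⟨min u v, hv', dist_eq_zero.1 (eq_zero_of_sKN_half_eq_zero hN dist_nonneg
    (hball' _ ⟨hv'.1.le, le_rfl⟩) ?_)⟩
  exact pow_eq_zero_iff two_ne_zero |>.1 (le_antisymm hg (sq_nonneg _))

theorem IsEVIKN.antitoneOn (hlsc : LowerSemicontinuous f) (hy : IsEVIKN f K N T y) (hN : N < 0) :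
    AntitoneOn (fun t => f (y t)) (domT T) := by
  intro u hu v hv huv
  by_contra! hlt
  obtain ⟨c, huc, hcv⟩ := exists_between hlt
  have hsub : Icc u v ⊆ domT T := (ordConnected_domT T).out hu hv
  set S := Icc u v ∩ y ⁻¹' (f ⁻¹' Iic c)
  have hS : IsClosed S :=
    (hy.2.1.mono hsub).preimage_isClosed_of_isClosed isClosed_Icc (hlsc.isClosed_preimage c)
  have hbdd : BddAbove S := ⟨v, fun r hr => hr.1.2⟩
  have hw : sSup S ∈ S := hS.csSup_mem ⟨u, ⟨le_rfl, huv⟩, huc.le⟩ hbdd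
  have hwv : sSup S < v := hw.1.2.lt_of_ne fun h => not_lt.2 (h ▸ hw.2 : f (y v) ≤ c) hcv
  have hmin : ∀ r ∈ Ioc (sSup S) v, f (y (sSup S)) ≤ f (y r) := fun r hr =>
    hw.2.trans (not_le.1 fun hrc =>
      not_lt.2 (le_csSup hbdd ⟨⟨hw.1.1.trans hr.1.le, hr.2⟩, hrc⟩) hr.1).le
  obtain ⟨r, hr, hyr⟩ := hy.exists_eq_of_forall_le hN (hsub hw.1) hv hwv hmin
  exact not_lt.2 (le_csSup hbdd ⟨⟨hw.1.1.trans hr.1.le, hr.2⟩, by simpa [hyr] using hw.2⟩) hr.1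

end KNPaper

theorem stmt_4 {X : Type*} [MetricSpace X] (f : X → EReal) (hlsc : LowerSemicontinuous f)
    (K N : ℝ) (hN : N < 0) (T : ℝ≥0∞) (y : ℝ → X)
    (hy : KNPaper.IsEVIKN f K N T y) :
    ∀ s ∈ KNPaper.domT T, ∀ t ∈ KNPaper.domT T, s ≤ t → f (y t) ≤ f (y s) :=
  hy.antitoneOn hlsc hN
end
end

section
/- Let (X, d) be a metric space, N < 0, and f : X → [−∞,+∞] lower semicontinuous with D[f] ≠ ∅. Then ℛ₁ maps 𝒞′ into 𝒞″_N, ℛ₂ maps 𝒞″_N into 𝒞′, and the two maps are mutually inverse: ℛ₂ ∘ ℛ₁ = id on 𝒞′ and ℛ₁ ∘ ℛ₂ = id on 𝒞″_N. -/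
/-!
Both `ℛ₁` and `ℛ₂` reparametrize a curve by the primitive `P t = ∫₀ᵗ u` of a positive density
which is monotone along the curve: `u = -N / f_N(y)` for `ℛ₁` and `u = -f_N(z) / N` for `ℛ₂`.
Such a `P` is an increasing homeomorphism of `(0,T)` onto `(0,T')`, and `P' = u` off the countable
set where the monotone `u` jumps, so `∫_{P(J)} g = ∫_J u · (g ∘ P)`. The density
of the reverse map along `y ∘ P⁻¹` is `1 / (u ∘ P⁻¹)`, whose primitive is therefore `P⁻¹`: this
gives both inverse identities. Along `ℛ₁(y)` the same formula gives `∫_{P(J)} f_N(y ∘ P⁻¹) = -N |J|`;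
this is finite on `(0, min(T',1))` because `T' = ∞` when `T = ∞`, `u` being nondecreasing.
-/

open Filter MeasureTheory Set
open scoped ENNReal Topology

noncomputable section

namespace KNPaper

variable {X : Type*} [MetricSpace X]

theorem integrableOn_Ioo_of_monotoneOn {u : ℝ → ℝ} {a b : ℝ} (hu : MonotoneOn u (Ioc a b))
    (h0 : ∀ x ∈ Ioo a b, 0 ≤ u x) : IntegrableOn u (Ioo a b) := by
  rcases le_or_gt b a with hba | hab
  · simp [Ioo_eq_empty_of_le hba]
  refine Integrable.of_bound (aemeasurable_restrict_of_monotoneOn measurableSet_Ioo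
    (hu.mono Ioo_subset_Ioc_self)).aestronglyMeasurable (u b)
    (ae_restrict_of_forall_mem measurableSet_Ioo fun x hx => ?_)
  rw [Real.norm_of_nonneg (h0 x hx)]
  exact hu (Ioo_subset_Ioc_self hx) (right_mem_Ioc.2 hab) hx.2.le

section TimeDomain

variable {T : ℝ≥0∞} {s t : ℝ}

theorem isOpen_domT : IsOpen (domT T) :=
  isOpen_Ioi.inter (isOpen_Iio.preimage ENNReal.continuous_ofReal)

theorem measurableSet_domT : MeasurableSet (domT T) := isOpen_domT.measurableSet

theorem mem_domT_of_le (ht : t ∈ domT T) (hs : 0 < s) (hst : s ≤ t) : s ∈ domT T :=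
  ⟨hs, (ENNReal.ofReal_le_ofReal hst).trans_lt ht.2⟩

theorem Ioo_subset_domT (ht : t ∈ domT T) : Ioo 0 t ⊆ domT T := fun _ hr =>
  mem_domT_of_le ht hr.1 hr.2.le

instance : OrdConnected (domT T) :=
  ⟨fun _ hs _ ht _ hr => mem_domT_of_le ht (hs.1.trans_le hr.1) hr.2⟩

theorem Ioo_toReal_subset_domT {T₀ : ℝ≥0∞} (h : T₀ ≤ T) : Ioo 0 T₀.toReal ⊆ domT T := fun _ hr =>
  ⟨hr.1, ((ENNReal.ofReal_lt_ofReal_iff_of_nonneg hr.1.le).2 hr.2).trans_le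
    (ENNReal.ofReal_toReal_le.trans h)⟩

theorem domT_nonempty_iff : (domT T).Nonempty ↔ 0 < T := by
  refine ⟨fun ⟨t, ht⟩ => pos_of_gt ht.2, fun hT => ?_⟩
  obtain ⟨r, -, hr0, hrT⟩ := ENNReal.lt_iff_exists_real_btwn.1 hT
  exact ⟨r, ENNReal.ofReal_pos.1 hr0, hrT⟩

theorem exists_gt_mem_domT (ht : t ∈ domT T) : ∃ t' ∈ domT T, t < t' := by
  obtain ⟨r, -, htr, hrT⟩ := ENNReal.lt_iff_exists_real_btwn.1 ht.2
  have htr' : t < r := (ENNReal.ofReal_lt_ofReal_iff_of_nonneg ht.1.le).1 htr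
  exact ⟨r, ⟨ht.1.trans htr', hrT⟩, htr'⟩

theorem domT_iSup_ofReal {ι : Type*} (I : Set ι) (a : ι → ℝ) :
    domT (⨆ i ∈ I, ENNReal.ofReal (a i)) = ⋃ i ∈ I, Ioo 0 (a i) := by
  ext s
  simp only [domT, mem_ofPred_eq, lt_iSup_iff, mem_iUnion, mem_Ioo, exists_prop]
  constructor
  · rintro ⟨hs, i, hi, hsi⟩
    exact ⟨i, hi, hs, (ENNReal.ofReal_lt_ofReal_iff_of_nonneg hs.le).1 hsi⟩
  · rintro ⟨i, hi, hs, hsi⟩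
    exact ⟨hs, i, hi, ENNReal.ofReal_lt_ofReal_iff'.2 ⟨hsi, hs.trans hsi⟩⟩

theorem iSup_domT_ofReal : ⨆ t ∈ domT T, ENNReal.ofReal t = T := by
  refine le_antisymm (iSup₂_le fun t ht => ht.2.le) (le_of_forall_lt fun b hb => ?_)
  obtain ⟨r, -, hbr, hrT⟩ := ENNReal.lt_iff_exists_real_btwn.1 hb
  exact hbr.trans_le <| le_biSup (fun t => ENNReal.ofReal t)
    ⟨ENNReal.ofReal_pos.1 (pos_of_gt hbr), hrT⟩

theorem domT_eq_biUnion_Ioo : domT T = ⋃ t ∈ domT T, Ioo 0 t := by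
  conv_lhs => rw [← iSup_domT_ofReal (T := T)]
  exact domT_iSup_ofReal _ _

theorem volume_domT : volume (domT T) = T := by
  rcases eq_or_ne T ⊤ with rfl | hT
  · have : domT ⊤ = Ioi 0 := by ext; simp [domT]
    simp [this]
  · have : domT T = Ioo 0 T.toReal := by
      ext t
      simp only [domT, mem_ofPred_eq, mem_Ioo, and_congr_right_iff]
      exact fun ht => ENNReal.ofReal_lt_iff_lt_toReal ht.le hT
    rw [this, Real.volume_Ioo, sub_zero, ENNReal.ofReal_toReal hT]

theorem integrableOn_Ioo_of_antitoneOn {u : ℝ → ℝ} {S : ℝ} (hu : AntitoneOn u (domT T))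
    (hS0 : 0 < S) (hS : IntegrableOn u (Ioo 0 S)) (ht : t ∈ domT T) :
    IntegrableOn u (Ioo 0 t) := by
  rcases le_or_gt t S with htS | hSt
  · exact hS.mono_set (Ioo_subset_Ioo_right htS)
  have hSdom : S ∈ domT T := Ioo_subset_domT ht ⟨hS0, hSt⟩
  have hSt_int : IntegrableOn u (Icc S t) :=
    (hu.mono (Set.Icc_subset _ hSdom ht)).integrableOn_isCompact isCompact_Icc
  refine (hS.union hSt_int).mono_set fun r hr => ?_
  rcases lt_or_ge r S with hrS | hrS
  exacts [Or.inl ⟨hr.1, hrS⟩, Or.inr ⟨hrS, hr.2.le⟩]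

end TimeDomain

section Primitive

def primitive (u : ℝ → ℝ) (t : ℝ) : ℝ := ∫ r in Ioo 0 t, u r

def endTime (T : ℝ≥0∞) (u : ℝ → ℝ) : ℝ≥0∞ := ⨆ t ∈ domT T, ENNReal.ofReal (primitive u t)

def reparam (T : ℝ≥0∞) (u : ℝ → ℝ) : ℝ → ℝ := Function.invFunOn (primitive u) (domT T)

/-- The density of the reverse reparametrization, `1 / (u ∘ P⁻¹)` with `P = primitive u`. -/
def invDensity (T : ℝ≥0∞) (u : ℝ → ℝ) (s : ℝ) : ℝ := (u (reparam T u s))⁻¹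

structure AdmissibleDensity (T : ℝ≥0∞) (u : ℝ → ℝ) : Prop where
  pos : ∀ t ∈ domT T, 0 < u t
  monotoneOn_or_antitoneOn : MonotoneOn u (domT T) ∨ AntitoneOn u (domT T)
  integrableOn : ∀ t ∈ domT T, IntegrableOn u (Ioo 0 t)

variable {T : ℝ≥0∞} {u : ℝ → ℝ} {a b s t : ℝ}

@[simp]
theorem primitive_zero (u : ℝ → ℝ) : primitive u 0 = 0 := by simp [primitive]

theorem primitive_eq_intervalIntegral (ht : 0 ≤ t) : primitive u t = ∫ r in 0..t, u r := by
  rw [intervalIntegral.integral_of_le ht, integral_Ioc_eq_integral_Ioo, primitive]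

namespace AdmissibleDensity

theorem intervalIntegrable (hu : AdmissibleDensity T u) (ha : 0 ≤ a) (hab : a ≤ b)
    (hb : b ∈ domT T) : IntervalIntegrable u volume a b :=
  (intervalIntegrable_iff_integrableOn_Ioo_of_le hab).2 <|
    (hu.integrableOn b hb).mono_set (Ioo_subset_Ioo_left ha)

theorem primitive_sub (hu : AdmissibleDensity T u) (ha : 0 ≤ a) (hab : a ≤ b)
    (hb : b ∈ domT T) : primitive u b - primitive u a = ∫ r in a..b, u r := by
  have h0b := hu.intervalIntegrable le_rfl (ha.trans hab) hb
  rw [primitive_eq_intervalIntegral (ha.trans hab), primitive_eq_intervalIntegral ha,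
    intervalIntegral.integral_interval_sub_left h0b
      (h0b.mono_set (uIcc_subset_uIcc left_mem_uIcc (mem_uIcc_of_le ha hab)))]

theorem primitive_lt_primitive (hu : AdmissibleDensity T u) (ha : 0 ≤ a) (hab : a < b)
    (hb : b ∈ domT T) : primitive u a < primitive u b := by
  have hpos := intervalIntegral.intervalIntegral_pos_of_pos_on
    (hu.intervalIntegrable ha hab.le hb)
    (fun x hx => hu.pos x (Ioo_subset_domT hb ⟨ha.trans_lt hx.1, hx.2⟩)) hab
  linarith [hu.primitive_sub ha hab.le hb]

theorem strictMonoOn_primitive (hu : AdmissibleDensity T u) :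
    StrictMonoOn (primitive u) (domT T) := fun _ ha _ hb hab =>
  hu.primitive_lt_primitive ha.1.le hab hb

theorem injOn_primitive (hu : AdmissibleDensity T u) : InjOn (primitive u) (domT T) :=
  hu.strictMonoOn_primitive.injOn

theorem continuousOn_primitive_Icc (hu : AdmissibleDensity T u) (ht : t ∈ domT T) :
    ContinuousOn (primitive u) (Icc 0 t) := by
  have hint : IntegrableOn u (uIcc 0 t) := by
    rw [uIcc_of_le ht.1.le, integrableOn_Icc_iff_integrableOn_Ioo]
    exact hu.integrableOn t ht
  have := intervalIntegral.continuousOn_primitive_interval hint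
  rw [uIcc_of_le ht.1.le] at this
  exact this.congr fun x hx => primitive_eq_intervalIntegral hx.1

theorem image_primitive_Ioo (hu : AdmissibleDensity T u) (ht : t ∈ domT T) :
    primitive u '' Ioo 0 t = Ioo 0 (primitive u t) := by
  have := (hu.continuousOn_primitive_Icc ht).image_Ioo_of_strictMonoOn ht.1.le
    fun _ ha _ hb hab =>
      hu.primitive_lt_primitive ha.1 hab (mem_domT_of_le ht (ha.1.trans_lt hab) hb.2)
  rwa [primitive_zero] at this

theorem image_primitive_domT (hu : AdmissibleDensity T u) :
    primitive u '' domT T = domT (endTime T u) := by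
  conv_lhs => rw [domT_eq_biUnion_Ioo]
  rw [image_iUnion₂, endTime, domT_iSup_ofReal]
  exact iUnion₂_congr fun t ht => hu.image_primitive_Ioo ht

theorem primitive_mem (hu : AdmissibleDensity T u) (ht : t ∈ domT T) :
    primitive u t ∈ domT (endTime T u) :=
  hu.image_primitive_domT ▸ mem_image_of_mem _ ht

theorem endTime_pos (hu : AdmissibleDensity T u) (hT : 0 < T) : 0 < endTime T u := by
  rw [← domT_nonempty_iff, ← hu.image_primitive_domT]
  exact (domT_nonempty_iff.2 hT).image _

theorem reparam_primitive (hu : AdmissibleDensity T u) (ht : t ∈ domT T) :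
    reparam T u (primitive u t) = t :=
  hu.injOn_primitive.leftInvOn_invFunOn ht

theorem reparam_mem (hu : AdmissibleDensity T u) (hs : s ∈ domT (endTime T u)) :
    reparam T u s ∈ domT T := by
  rw [← hu.image_primitive_domT] at hs
  exact Function.invFunOn_mem hs

theorem primitive_reparam (hu : AdmissibleDensity T u) (hs : s ∈ domT (endTime T u)) :
    primitive u (reparam T u s) = s := by
  rw [← hu.image_primitive_domT] at hs
  exact Function.invFunOn_eq hs

theorem mapsTo_reparam (hu : AdmissibleDensity T u) :
    MapsTo (reparam T u) (domT (endTime T u)) (domT T) := fun _ hs => hu.reparam_mem hs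

theorem image_reparam (hu : AdmissibleDensity T u) :
    reparam T u '' domT (endTime T u) = domT T := by
  rw [← hu.image_primitive_domT]
  exact hu.injOn_primitive.leftInvOn_invFunOn.image_image

theorem monotoneOn_reparam (hu : AdmissibleDensity T u) :
    MonotoneOn (reparam T u) (domT (endTime T u)) := fun a ha b hb hab => by
  rw [← hu.strictMonoOn_primitive.le_iff_le (hu.reparam_mem ha) (hu.reparam_mem hb),
    hu.primitive_reparam ha, hu.primitive_reparam hb]
  exact hab

theorem continuousOn_reparam (hu : AdmissibleDensity T u) :
    ContinuousOn (reparam T u) (domT (endTime T u)) := fun _ hs =>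
  (continuousAt_of_monotoneOn_of_image_mem_nhds hu.monotoneOn_reparam
    (isOpen_domT.mem_nhds hs)
    (hu.image_reparam ▸ isOpen_domT.mem_nhds (hu.reparam_mem hs))).continuousWithinAt

theorem hasDerivAt_primitive (hu : AdmissibleDensity T u) (ht : t ∈ domT T)
    (hc : ContinuousAt u t) : HasDerivAt (primitive u) (u t) t := by
  obtain ⟨t', ht', htt'⟩ := exists_gt_mem_domT ht
  have hmeas : StronglyMeasurableAtFilter u (𝓝 t) :=
    ⟨Ioo 0 t', Ioo_mem_nhds ht.1 htt', (hu.integrableOn t' ht').aestronglyMeasurable⟩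
  refine (intervalIntegral.integral_hasDerivAt_right
    (hu.intervalIntegrable le_rfl ht.1.le ht) hmeas hc).congr_of_eventuallyEq ?_
  filter_upwards [Ioi_mem_nhds ht.1] with r hr using primitive_eq_intervalIntegral hr.le

theorem countable_not_continuousAt (hu : AdmissibleDensity T u) :
    {t ∈ domT T | ¬ContinuousAt u t}.Countable :=
  (hu.monotoneOn_or_antitoneOn.elim MonotoneOn.countable_not_continuousWithinAt
    AntitoneOn.countable_not_continuousWithinAt).mono <| by
    rintro t ⟨ht, hc⟩
    exact ⟨ht, fun hw => hc (hw.continuousAt (isOpen_domT.mem_nhds ht))⟩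

theorem lintegral_image_primitive (hu : AdmissibleDensity T u) {J : Set ℝ} (hJ : J ⊆ domT T)
    (hJm : MeasurableSet J) (g : ℝ → ℝ≥0∞) :
    ∫⁻ s in primitive u '' J, g s = ∫⁻ t in J, ENNReal.ofReal (u t) * g (primitive u t) := by
  set D := {t ∈ domT T | ¬ContinuousAt u t}
  have hD : D.Countable := hu.countable_not_continuousAt
  have hcov := lintegral_image_eq_lintegral_abs_deriv_mul (hJm.diff hD.measurableSet)
    (fun t ht => (hu.hasDerivAt_primitive (hJ ht.1)
      (not_not.1 fun hc => ht.2 ⟨hJ ht.1, hc⟩)).hasDerivWithinAt)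
    (hu.injOn_primitive.mono fun t ht => hJ ht.1) g
  have himage : primitive u '' (J \ D) =ᵐ[volume] primitive u '' J := by
    rw [(hu.injOn_primitive.mono hJ).image_sdiff]
    exact sdiff_null_ae_eq_self (((hD.mono inter_subset_right).image _).measure_zero _)
  rw [← setLIntegral_congr himage, hcov,
    setLIntegral_congr (sdiff_null_ae_eq_self (hD.measure_zero _))]
  refine setLIntegral_congr_fun hJm fun t ht => ?_
  rw [abs_of_pos (hu.pos t (hJ ht))]

theorem lintegral_image_invDensity (hu : AdmissibleDensity T u) {J : Set ℝ} (hJ : J ⊆ domT T)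
    (hJm : MeasurableSet J) :
    ∫⁻ s in primitive u '' J, ENNReal.ofReal (invDensity T u s) = volume J := by
  rw [hu.lintegral_image_primitive hJ hJm, ← setLIntegral_one]
  refine setLIntegral_congr_fun hJm fun t ht => ?_
  have hpos := hu.pos t (hJ ht)
  rw [invDensity, hu.reparam_primitive (hJ ht), ← ENNReal.ofReal_mul hpos.le,
    mul_inv_cancel₀ hpos.ne', ENNReal.ofReal_one]

theorem aemeasurable_invDensity (hu : AdmissibleDensity T u) (hs : s ∈ domT (endTime T u)) :
    AEMeasurable (invDensity T u) (volume.restrict (Ioo 0 s)) := by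
  have hsub := Ioo_subset_domT hs
  have : AEMeasurable (u ∘ reparam T u) (volume.restrict (Ioo 0 s)) := by
    rcases hu.monotoneOn_or_antitoneOn with hm | hm
    · exact aemeasurable_restrict_of_monotoneOn measurableSet_Ioo
        ((hm.comp hu.monotoneOn_reparam hu.mapsTo_reparam).mono hsub)
    · exact aemeasurable_restrict_of_antitoneOn measurableSet_Ioo
        ((hm.comp_MonotoneOn hu.monotoneOn_reparam hu.mapsTo_reparam).mono hsub)
  exact this.inv

theorem primitive_invDensity_primitive (hu : AdmissibleDensity T u) (ht : t ∈ domT T) :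
    primitive (invDensity T u) (primitive u t) = t := by
  have hs := hu.primitive_mem ht
  have hnonneg : 0 ≤ᵐ[volume.restrict (Ioo 0 (primitive u t))] invDensity T u :=
    ae_restrict_of_forall_mem measurableSet_Ioo fun r hr =>
      (inv_pos.2 (hu.pos _ (hu.reparam_mem (Ioo_subset_domT hs hr)))).le
  rw [primitive, integral_eq_lintegral_of_nonneg_ae hnonneg
      (hu.aemeasurable_invDensity hs).aestronglyMeasurable, ← hu.image_primitive_Ioo ht,
    hu.lintegral_image_invDensity (Ioo_subset_domT ht) measurableSet_Ioo, Real.volume_Ioo,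
    sub_zero, ENNReal.toReal_ofReal ht.1.le]

theorem primitive_invDensity (hu : AdmissibleDensity T u) (hs : s ∈ domT (endTime T u)) :
    primitive (invDensity T u) s = reparam T u s := by
  conv_lhs => rw [← hu.primitive_reparam hs]
  exact hu.primitive_invDensity_primitive (hu.reparam_mem hs)

theorem endTime_invDensity (hu : AdmissibleDensity T u) :
    endTime (endTime T u) (invDensity T u) = T := by
  rw [endTime, ← hu.image_primitive_domT, iSup_image]
  calc ⨆ t ∈ domT T, ENNReal.ofReal (primitive (invDensity T u) (primitive u t))
      = ⨆ t ∈ domT T, ENNReal.ofReal t :=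
        biSup_congr fun t ht => by rw [hu.primitive_invDensity_primitive ht]
    _ = T := iSup_domT_ofReal

theorem reparam_invDensity (hu : AdmissibleDensity T u) (ht : t ∈ domT T) :
    reparam (endTime T u) (invDensity T u) t = primitive u t := by
  have hinj : InjOn (primitive (invDensity T u)) (domT (endTime T u)) := fun a ha b hb hab => by
    rw [← hu.primitive_reparam ha, ← hu.primitive_reparam hb,
      ← hu.primitive_invDensity ha, ← hu.primitive_invDensity hb, hab]
  calc reparam (endTime T u) (invDensity T u) t
      = reparam (endTime T u) (invDensity T u)
          (primitive (invDensity T u) (primitive u t)) := by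
        rw [hu.primitive_invDensity_primitive ht]
    _ = primitive u t := hinj.leftInvOn_invFunOn (hu.primitive_mem ht)

theorem reparam_reparam_invDensity (hu : AdmissibleDensity T u) (ht : t ∈ domT T) :
    reparam T u (reparam (endTime T u) (invDensity T u) t) = t := by
  rw [hu.reparam_invDensity ht, hu.reparam_primitive ht]

theorem endTime_top (hu : AdmissibleDensity ⊤ u) (hmono : MonotoneOn u (domT ⊤)) :
    endTime ⊤ u = ⊤ := by
  have hdom : ∀ {t : ℝ}, 0 < t → t ∈ domT ⊤ := fun ht => ⟨ht, ENNReal.ofReal_lt_top⟩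
  refine ENNReal.eq_top_of_forall_nnreal_le fun r => ?_
  have hu1 := hu.pos 1 (hdom one_pos)
  set t := 1 + r / u 1
  have h1t : 1 ≤ t := le_add_of_nonneg_right (by positivity)
  have ht := hdom (one_pos.trans_le h1t)
  have hlin : (t - 1) * u 1 ≤ primitive u t - primitive u 1 := by
    rw [hu.primitive_sub zero_le_one h1t ht, ← smul_eq_mul, ← intervalIntegral.integral_const]
    exact intervalIntegral.integral_mono_on h1t intervalIntegrable_const
      (hu.intervalIntegrable zero_le_one h1t ht)
      fun x hx => hmono (hdom one_pos) (hdom (one_pos.trans_le hx.1)) hx.1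
  have hr : (r : ℝ) = (t - 1) * u 1 := by simp only [t]; field_simp; ring
  have h1 := hu.primitive_lt_primitive le_rfl one_pos (hdom one_pos)
  rw [primitive_zero] at h1
  calc (r : ℝ≥0∞) = ENNReal.ofReal r := (ENNReal.ofReal_coe_nnreal).symm
    _ ≤ ENNReal.ofReal (primitive u t) := ENNReal.ofReal_le_ofReal (by linarith)
    _ ≤ endTime ⊤ u := le_biSup (fun t => ENNReal.ofReal (primitive u t)) ht

theorem setLIntegral_invDensity_lt_top (hu : AdmissibleDensity T u)
    (hmono : MonotoneOn u (domT T)) :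
    ∫⁻ s in Ioo 0 (min (endTime T u) 1).toReal, ENNReal.ofReal (invDensity T u s) < ⊤ := by
  rcases eq_or_ne T ⊤ with rfl | hT
  · obtain ⟨t, ht, h1⟩ : (1 : ℝ) ∈ primitive u '' domT ⊤ := by
      rw [hu.image_primitive_domT, hu.endTime_top hmono]
      exact ⟨one_pos, ENNReal.ofReal_lt_top⟩
    rw [hu.endTime_top hmono, min_eq_right le_top, ENNReal.toReal_one, ← h1,
      ← hu.image_primitive_Ioo ht,
      hu.lintegral_image_invDensity (Ioo_subset_domT ht) measurableSet_Ioo]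
    exact measure_Ioo_lt_top
  · calc ∫⁻ s in Ioo 0 (min (endTime T u) 1).toReal, ENNReal.ofReal (invDensity T u s)
        ≤ ∫⁻ s in domT (endTime T u), ENNReal.ofReal (invDensity T u s) :=
          lintegral_mono_set (Ioo_toReal_subset_domT (min_le_left _ _))
      _ = T := by
          rw [← hu.image_primitive_domT,
            hu.lintegral_image_invDensity subset_rfl measurableSet_domT, volume_domT]
      _ < ⊤ := hT.lt_top

end AdmissibleDensity

end Primitive

section ExponentialTransform

variable {X : Type*} {f : X → EReal} {N : ℝ} {T : ℝ≥0∞} {x x' : X} {y z : ℝ → X} {s : ℝ}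

theorem fN_toReal (hx : x ∈ Dom f) : (fN f N x).toReal = Real.exp (-1 / N * (f x).toReal) := by
  rw [fN, ← EReal.coe_toReal hx.1 hx.2, ← EReal.coe_mul, eexp, if_neg (EReal.coe_ne_top _),
    if_neg (EReal.coe_ne_bot _), EReal.toReal_coe, EReal.toReal_coe,
    ENNReal.toReal_ofReal (Real.exp_pos _).le]

theorem fN_ne_top (hx : x ∈ Dom f) : fN f N x ≠ ⊤ := by
  rw [fN, ← EReal.coe_toReal hx.1 hx.2, ← EReal.coe_mul, eexp, if_neg (EReal.coe_ne_top _),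
    if_neg (EReal.coe_ne_bot _)]
  exact ENNReal.ofReal_ne_top

theorem fN_toReal_pos (hx : x ∈ Dom f) : 0 < (fN f N x).toReal :=
  (fN_toReal hx).symm ▸ Real.exp_pos _

theorem fN_toReal_le_fN_toReal (hN : N < 0) (hx : x ∈ Dom f) (hx' : x' ∈ Dom f)
    (h : f x ≤ f x') : (fN f N x).toReal ≤ (fN f N x').toReal := by
  rw [fN_toReal hx, fN_toReal hx']
  exact Real.exp_le_exp.2 (mul_le_mul_of_nonneg_left (EReal.toReal_le_toReal h hx.2 hx'.1)
    (div_nonneg_of_nonpos (by norm_num) hN.le))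

def alphaDensity (f : X → EReal) (N : ℝ) (y : ℝ → X) (t : ℝ) : ℝ :=
  -N * ((fN f N (y t))⁻¹).toReal

def betaDensity (f : X → EReal) (N : ℝ) (z : ℝ → X) (s : ℝ) : ℝ :=
  -(1 / N) * (fN f N (z s)).toReal

theorem alphaMap_eq_primitive : alphaMap f N y = primitive (alphaDensity f N y) :=
  funext fun _ => (integral_const_mul _ _).symm

theorem betaMap_eq_primitive : betaMap f N z = primitive (betaDensity f N z) :=
  funext fun _ => (integral_const_mul _ _).symm

theorem R1T_eq_endTime : R1T f N T y = endTime T (alphaDensity f N y) := by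
  rw [R1T, endTime, alphaMap_eq_primitive]

theorem R2T_eq_endTime : R2T f N T z = endTime T (betaDensity f N z) := by
  rw [R2T, endTime, betaMap_eq_primitive]

theorem R1fun_eq_comp_reparam : R1fun f N T y = y ∘ reparam T (alphaDensity f N y) := by
  rw [R1fun, reparam, alphaMap_eq_primitive]

theorem R2fun_eq_comp_reparam : R2fun f N T z = z ∘ reparam T (betaDensity f N z) := by
  rw [R2fun, reparam, betaMap_eq_primitive]

theorem betaDensity_R1fun :
    betaDensity f N (R1fun f N T y) = invDensity T (alphaDensity f N y) := by
  funext s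
  simp only [betaDensity, invDensity, alphaDensity, R1fun_eq_comp_reparam, Function.comp_apply,
    ENNReal.toReal_inv, mul_inv, inv_inv, one_div, inv_neg]

theorem alphaDensity_R2fun :
    alphaDensity f N (R2fun f N T z) = invDensity T (betaDensity f N z) := by
  funext s
  simp only [betaDensity, invDensity, alphaDensity, R2fun_eq_comp_reparam, Function.comp_apply,
    ENNReal.toReal_inv, mul_inv, inv_inv, one_div, inv_neg]

theorem fN_eq_ofReal_mul_betaDensity (hN : N < 0) (hz : z s ∈ Dom f) :
    fN f N (z s) = ENNReal.ofReal (-N) * ENNReal.ofReal (betaDensity f N z s) := by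
  rw [← ENNReal.ofReal_mul (neg_nonneg.2 hN.le), betaDensity, ← mul_assoc, neg_mul_neg,
    mul_one_div_cancel hN.ne, one_mul, ENNReal.ofReal_toReal (fN_ne_top hz)]

end ExponentialTransform

section Curves

variable {X : Type*} [MetricSpace X] {f : X → EReal} {N : ℝ} {T : ℝ≥0∞} {y z : ℝ → X}
  {u : ℝ → ℝ} {t : ℝ}

theorem InC'.comp_reparam (hy : InC' f T y) (hu : AdmissibleDensity T u) :
    InC' f (endTime T u) (y ∘ reparam T u) :=
  ⟨⟨hu.endTime_pos hy.1.1, hy.1.2.1.comp hu.continuousOn_reparam hu.mapsTo_reparam,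
      fun _ hs => hy.1.2.2 _ (hu.reparam_mem hs)⟩,
    fun _ hs _ ht hst =>
      hy.2 _ (hu.reparam_mem hs) _ (hu.reparam_mem ht) (hu.monotoneOn_reparam hs ht hst)⟩

theorem antitoneOn_fN_toReal (hN : N < 0) (hy : InC' f T y) :
    AntitoneOn (fun t => (fN f N (y t)).toReal) (domT T) := fun s hs t ht hst =>
  fN_toReal_le_fN_toReal hN (hy.1.2.2 t ht) (hy.1.2.2 s hs) (hy.2 s hs t ht hst)

theorem antitoneOn_fN (hN : N < 0) (hy : InC' f T y) :
    AntitoneOn (fun t => fN f N (y t)) (domT T) := fun s hs t ht hst =>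
  (ENNReal.toReal_le_toReal (fN_ne_top (hy.1.2.2 t ht)) (fN_ne_top (hy.1.2.2 s hs))).1
    (antitoneOn_fN_toReal hN hy hs ht hst)

theorem alphaDensity_pos (hN : N < 0) (hy : InC' f T y) (ht : t ∈ domT T) :
    0 < alphaDensity f N y t := by
  rw [alphaDensity, ENNReal.toReal_inv]
  exact mul_pos (neg_pos.2 hN) (inv_pos.2 (fN_toReal_pos (hy.1.2.2 t ht)))

theorem monotoneOn_alphaDensity (hN : N < 0) (hy : InC' f T y) :
    MonotoneOn (alphaDensity f N y) (domT T) := fun s hs t ht hst => by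
  simp only [alphaDensity, ENNReal.toReal_inv]
  exact mul_le_mul_of_nonneg_left
    (inv_anti₀ (fN_toReal_pos (hy.1.2.2 t ht)) (antitoneOn_fN_toReal hN hy hs ht hst))
    (neg_nonneg.2 hN.le)

theorem admissibleDensity_alphaDensity (hN : N < 0) (hy : InC' f T y) :
    AdmissibleDensity T (alphaDensity f N y) where
  pos _ ht := alphaDensity_pos hN hy ht
  monotoneOn_or_antitoneOn := Or.inl (monotoneOn_alphaDensity hN hy)
  integrableOn _ ht := integrableOn_Ioo_of_monotoneOn
    ((monotoneOn_alphaDensity hN hy).mono fun _ hr => mem_domT_of_le ht hr.1 hr.2)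
    fun _ hr => (alphaDensity_pos hN hy (Ioo_subset_domT ht hr)).le

theorem antitoneOn_betaDensity (hN : N < 0) (hz : InC' f T z) :
    AntitoneOn (betaDensity f N z) (domT T) := fun _ hs _ ht hst =>
  mul_le_mul_of_nonneg_left (antitoneOn_fN_toReal hN hz hs ht hst)
    (neg_pos.2 (one_div_neg.2 hN)).le

theorem admissibleDensity_betaDensity (hN : N < 0) (hz : InC'' f N T z) :
    AdmissibleDensity T (betaDensity f N z) where
  pos _ ht := mul_pos (neg_pos.2 (one_div_neg.2 hN)) (fN_toReal_pos (hz.1.1.2.2 _ ht))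
  monotoneOn_or_antitoneOn := Or.inr (antitoneOn_betaDensity hN hz.1)
  integrableOn _ ht := by
    have hT := hz.1.1.1
    have hmeas : AEMeasurable (fun s => fN f N (z s)) (volume.restrict (Ioo 0 (min T 1).toReal)) :=
      aemeasurable_restrict_of_antitoneOn measurableSet_Ioo
        ((antitoneOn_fN hN hz.1).mono (Ioo_toReal_subset_domT (min_le_left T 1)))
    exact integrableOn_Ioo_of_antitoneOn (antitoneOn_betaDensity hN hz.1)
      (ENNReal.toReal_pos (lt_min hT one_pos).ne' (min_lt_of_right_lt ENNReal.one_lt_top).ne)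
      ((integrable_toReal_of_lintegral_ne_top hmeas hz.2.ne).const_mul _) ht

theorem inC''_R1fun (hN : N < 0) (hy : InC' f T y) :
    InC'' f N (R1T f N T y) (R1fun f N T y) := by
  have hu := admissibleDensity_alphaDensity hN hy
  have hz : InC' f (R1T f N T y) (R1fun f N T y) := by
    rw [R1T_eq_endTime, R1fun_eq_comp_reparam]
    exact hy.comp_reparam hu
  refine ⟨hz, ?_⟩
  have hK := Ioo_toReal_subset_domT (min_le_left (R1T f N T y) 1)
  rw [setLIntegral_congr_fun measurableSet_Ioo fun s hs =>
      fN_eq_ofReal_mul_betaDensity hN (hz.1.2.2 s (hK hs)),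
    lintegral_const_mul' _ _ ENNReal.ofReal_ne_top, betaDensity_R1fun, R1T_eq_endTime]
  exact ENNReal.mul_lt_top ENNReal.ofReal_lt_top
    (hu.setLIntegral_invDensity_lt_top (monotoneOn_alphaDensity hN hy))

theorem inC'_R2fun (hN : N < 0) (hz : InC'' f N T z) :
    InC' f (R2T f N T z) (R2fun f N T z) := by
  rw [R2T_eq_endTime, R2fun_eq_comp_reparam]
  exact hz.1.comp_reparam (admissibleDensity_betaDensity hN hz)

theorem R2T_R1T_R1fun (hN : N < 0) (hy : InC' f T y) :
    R2T f N (R1T f N T y) (R1fun f N T y) = T := by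
  rw [R2T_eq_endTime, betaDensity_R1fun, R1T_eq_endTime,
    (admissibleDensity_alphaDensity hN hy).endTime_invDensity]

theorem R2fun_R1T_R1fun (hN : N < 0) (hy : InC' f T y) (ht : t ∈ domT T) :
    R2fun f N (R1T f N T y) (R1fun f N T y) t = y t := by
  rw [R2fun_eq_comp_reparam, betaDensity_R1fun, R1T_eq_endTime, Function.comp_apply,
    R1fun_eq_comp_reparam, Function.comp_apply,
    (admissibleDensity_alphaDensity hN hy).reparam_reparam_invDensity ht]

theorem R1T_R2T_R2fun (hN : N < 0) (hz : InC'' f N T z) :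
    R1T f N (R2T f N T z) (R2fun f N T z) = T := by
  rw [R1T_eq_endTime, alphaDensity_R2fun, R2T_eq_endTime,
    (admissibleDensity_betaDensity hN hz).endTime_invDensity]

theorem R1fun_R2T_R2fun (hN : N < 0) (hz : InC'' f N T z) (ht : t ∈ domT T) :
    R1fun f N (R2T f N T z) (R2fun f N T z) t = z t := by
  rw [R1fun_eq_comp_reparam, alphaDensity_R2fun, R2T_eq_endTime, Function.comp_apply,
    R2fun_eq_comp_reparam, Function.comp_apply,
    (admissibleDensity_betaDensity hN hz).reparam_reparam_invDensity ht]

end Curves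

end KNPaper

theorem stmt_5_general {X : Type*} [MetricSpace X] (f : X → EReal) (N : ℝ) (hN : N < 0) :
    (∀ (T : ℝ≥0∞) (y : ℝ → X), KNPaper.InC' f T y →
        KNPaper.InC'' f N (KNPaper.R1T f N T y) (KNPaper.R1fun f N T y)) ∧
    (∀ (T : ℝ≥0∞) (z : ℝ → X), KNPaper.InC'' f N T z →
        KNPaper.InC' f (KNPaper.R2T f N T z) (KNPaper.R2fun f N T z)) ∧
    (∀ (T : ℝ≥0∞) (y : ℝ → X), KNPaper.InC' f T y →
        KNPaper.R2T f N (KNPaper.R1T f N T y) (KNPaper.R1fun f N T y) = T ∧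
        ∀ t ∈ KNPaper.domT T,
          KNPaper.R2fun f N (KNPaper.R1T f N T y) (KNPaper.R1fun f N T y) t = y t) ∧
    (∀ (T : ℝ≥0∞) (z : ℝ → X), KNPaper.InC'' f N T z →
        KNPaper.R1T f N (KNPaper.R2T f N T z) (KNPaper.R2fun f N T z) = T ∧
        ∀ s ∈ KNPaper.domT T,
          KNPaper.R1fun f N (KNPaper.R2T f N T z) (KNPaper.R2fun f N T z) s = z s) :=
  ⟨fun _ _ hy => KNPaper.inC''_R1fun hN hy,
    fun _ _ hz => KNPaper.inC'_R2fun hN hz,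
    fun _ _ hy => ⟨KNPaper.R2T_R1T_R1fun hN hy, fun _ ht => KNPaper.R2fun_R1T_R1fun hN hy ht⟩,
    fun _ _ hz => ⟨KNPaper.R1T_R2T_R2fun hN hz, fun _ hs => KNPaper.R1fun_R2T_R2fun hN hz hs⟩⟩

theorem stmt_5 {X : Type*} [MetricSpace X] (f : X → EReal) (N : ℝ) (hN : N < 0)
    (hlsc : LowerSemicontinuous f) (hD : (KNPaper.Dom f).Nonempty) :
    (∀ (T : ℝ≥0∞) (y : ℝ → X), KNPaper.InC' f T y →
        KNPaper.InC'' f N (KNPaper.R1T f N T y) (KNPaper.R1fun f N T y)) ∧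
    (∀ (T : ℝ≥0∞) (z : ℝ → X), KNPaper.InC'' f N T z →
        KNPaper.InC' f (KNPaper.R2T f N T z) (KNPaper.R2fun f N T z)) ∧
    (∀ (T : ℝ≥0∞) (y : ℝ → X), KNPaper.InC' f T y →
        KNPaper.R2T f N (KNPaper.R1T f N T y) (KNPaper.R1fun f N T y) = T ∧
        ∀ t ∈ KNPaper.domT T,
          KNPaper.R2fun f N (KNPaper.R1T f N T y) (KNPaper.R1fun f N T y) t = y t) ∧
    (∀ (T : ℝ≥0∞) (z : ℝ → X), KNPaper.InC'' f N T z →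
        KNPaper.R1T f N (KNPaper.R2T f N T z) (KNPaper.R2fun f N T z) = T ∧
        ∀ s ∈ KNPaper.domT T,
          KNPaper.R1fun f N (KNPaper.R2T f N T z) (KNPaper.R2fun f N T z) s = z s) :=
  stmt_5_general f N hN
end
end
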